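/- arXiv:1909.09308 — 3 statements merged into one kernel-verified Lean document; each statement's English description precedes it below -/
import Mathlib

section
/- For B(u) = γ(x)|u+w⁰|(u+w⁰) with γ = r/h, 0 < λ ≤ h, one has the coercivity-type lower bound (B(u), u)_{L²} ≥ −(r/(2λ))(‖w⁰‖_{L⁴}⁴ + ‖u‖_{L²}²) for all u, w⁰ ∈ L⁴(Ω;ℝ²) with u ∈ L²(Ω;ℝ²). -/
/-!
Pointwise, with `a = |u + w|`, `b = |w|`, `c = |u|`, Cauchy–Schwarz gives
`|u + w| ⟪u + w, u⟫ ≥ a²(a - b)`. This is nonnegative when `a ≥ b`; otherwise the triangle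
inequality `b - a ≤ c` and AM-GM give `a²(b - a) ≤ b² c ≤ (b⁴ + c²)/2`. Multiplying by
`0 ≤ γ ≤ r/λ` and integrating yields the bound; if `⟪B u, u⟫` is not integrable its integral is
`0`, which still dominates the nonpositive left-hand side.
-/

open MeasureTheory
open scoped RealInnerProductSpace

lemma neg_half_add_le_sq_mul_sub {a b c : ℝ} (ha : 0 ≤ a) (hc : b - a ≤ c) :
    -((b ^ 4 + c ^ 2) / 2) ≤ a ^ 2 * (a - b) := by
  rcases le_or_gt b a with hba | hab
  · nlinarith [mul_nonneg (sq_nonneg a) (sub_nonneg.2 hba), sq_nonneg (b ^ 2), sq_nonneg c]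
  · have hsq : a ^ 2 ≤ b ^ 2 := pow_le_pow_left₀ ha hab.le 2
    calc -((b ^ 4 + c ^ 2) / 2) ≤ -(b ^ 2 * c) := by nlinarith [sq_nonneg (b ^ 2 - c)]
      _ ≤ -(a ^ 2 * (b - a)) := by gcongr
      _ = a ^ 2 * (a - b) := by ring

section InnerProductSpace

variable {E : Type*} [NormedAddCommGroup E] [InnerProductSpace ℝ E]

lemma norm_add_mul_sub_norm_le_inner_add (u w : E) :
    ‖u + w‖ * (‖u + w‖ - ‖w‖) ≤ ⟪u + w, u⟫ := by
  have hsplit : ⟪u + w, u⟫ = ‖u + w‖ ^ 2 - ⟪u + w, w⟫ := by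
    rw [← real_inner_self_eq_norm_sq, inner_add_right (x := u + w) u w]; ring
  rw [hsplit]
  nlinarith [real_inner_le_norm (u + w) w]

lemma neg_half_add_le_norm_add_mul_inner_add (u w : E) :
    -((‖w‖ ^ 4 + ‖u‖ ^ 2) / 2) ≤ ‖u + w‖ * ⟪u + w, u⟫ := by
  have htri : ‖w‖ - ‖u + w‖ ≤ ‖u‖ := by
    simpa using norm_sub_norm_le w (u + w)
  calc -((‖w‖ ^ 4 + ‖u‖ ^ 2) / 2) ≤ ‖u + w‖ ^ 2 * (‖u + w‖ - ‖w‖) :=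
        neg_half_add_le_sq_mul_sub (norm_nonneg _) htri
    _ = ‖u + w‖ * (‖u + w‖ * (‖u + w‖ - ‖w‖)) := by ring
    _ ≤ ‖u + w‖ * ⟪u + w, u⟫ :=
        mul_le_mul_of_nonneg_left (norm_add_mul_sub_norm_le_inner_add u w) (norm_nonneg _)

lemma neg_div_two_mul_le_inner_smul_norm_add {g K : ℝ} (hg : 0 ≤ g) (hgK : g ≤ K) (u w : E) :
    -(K / 2) * (‖w‖ ^ 4 + ‖u‖ ^ 2) ≤ ⟪(g * ‖u + w‖) • (u + w), u⟫ := by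
  have hX : 0 ≤ ‖w‖ ^ 4 + ‖u‖ ^ 2 := by positivity
  rw [real_inner_smul_left, mul_assoc]
  calc -(K / 2) * (‖w‖ ^ 4 + ‖u‖ ^ 2) ≤ g * -((‖w‖ ^ 4 + ‖u‖ ^ 2) / 2) := by nlinarith
    _ ≤ g * (‖u + w‖ * ⟪u + w, u⟫) :=
        mul_le_mul_of_nonneg_left (neg_half_add_le_norm_add_mul_inner_add u w) hg

end InnerProductSpace

lemma integral_le_integral_of_nonpos_of_le {α : Type*} [MeasurableSpace α] {μ : Measure α}
    {f g : α → ℝ} (hg : Integrable g μ) (hg_nonpos : g ≤ 0) (hgf : g ≤ f) :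
    ∫ x, g x ∂μ ≤ ∫ x, f x ∂μ := by
  by_cases hf : Integrable f μ
  · exact integral_mono hg hf hgf
  · rw [integral_undef hf]
    exact integral_nonpos hg_nonpos

lemma rpow_one_div_ofNat_pow {x : ℝ} (hx : 0 ≤ x) (n : ℕ) [n.AtLeastTwo] :
    (x ^ ((1 : ℝ) / ofNat(n))) ^ (ofNat(n) : ℕ) = x := by
  rw [one_div, ← Nat.cast_ofNat, Real.rpow_inv_natCast_pow hx (NeZero.ne _)]

theorem tidal_B_coercive_lower_bound_general
    {Ω : Type*} [MeasureSpace Ω]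
    (lam r : ℝ) (hlam : 0 < lam) (hr : 0 < r)
    (h : Ω → ℝ) (hh : ∀ x, lam ≤ h x)
    (γ : Ω → ℝ) (hγ : ∀ x, γ x = r / h x)
    (u w0 : Ω → EuclideanSpace ℝ (Fin 2))
    (hu2 : MemLp u 2) (hw : MemLp w0 4)
    (B : (Ω → EuclideanSpace ℝ (Fin 2)) → Ω → EuclideanSpace ℝ (Fin 2))
    (hB : ∀ z x, B z x = (γ x * ‖z x + w0 x‖) • (z x + w0 x)) :
    -(r / (2 * lam)) *
        (((∫ x, ‖w0 x‖ ^ 4) ^ ((1:ℝ)/4)) ^ 4 + ((∫ x, ‖u x‖ ^ 2) ^ ((1:ℝ)/2)) ^ 2)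
      ≤ ∫ x, ⟪B u x, u x⟫ := by
  have hγ_nonneg (x : Ω) : 0 ≤ γ x := hγ x ▸ div_nonneg hr.le (hlam.trans_le (hh x)).le
  have hγ_le (x : Ω) : γ x ≤ r / lam := hγ x ▸ div_le_div_of_nonneg_left hr.le hlam (hh x)
  have hw_int : Integrable fun x => ‖w0 x‖ ^ 4 := hw.integrable_norm_pow (p := 4) (by norm_num)
  have hu_int : Integrable fun x => ‖u x‖ ^ 2 := hu2.integrable_norm_pow (p := 2) (by norm_num)
  rw [rpow_one_div_ofNat_pow (integral_nonneg fun _ => by positivity),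
    rpow_one_div_ofNat_pow (integral_nonneg fun _ => by positivity),
    ← integral_add hw_int hu_int, ← integral_const_mul, div_mul_eq_div_div_swap]
  refine integral_le_integral_of_nonpos_of_le ((hw_int.add hu_int).const_mul _)
    (fun x => mul_nonpos_of_nonpos_of_nonneg ?_ (by positivity)) fun x => ?_
  · exact neg_nonpos.2 (div_nonneg (div_nonneg hr.le hlam.le) zero_le_two)
  · simpa only [hB] using neg_div_two_mul_le_inner_smul_norm_add (hγ_nonneg x) (hγ_le x) (u x) (w0 x)

/-- Coercivity-type lower bound for the tidal nonlinearity `B(u) = γ(x)|u+w⁰|(u+w⁰)`,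
`γ = r/h`, `0 < λ ≤ h`:
`(B(u), u)_{L²} ≥ −(r/(2λ))(‖w⁰‖_{L⁴}⁴ + ‖u‖_{L²}²)`. -/
theorem tidal_B_coercive_lower_bound
    {Ω : Type*} [MeasureSpace Ω]
    (lam r : ℝ) (hlam : 0 < lam) (hr : 0 < r)
    (h : Ω → ℝ) (hh : ∀ x, lam ≤ h x)
    (γ : Ω → ℝ) (hγ : ∀ x, γ x = r / h x)
    (u w0 : Ω → EuclideanSpace ℝ (Fin 2))
    (hu4 : MemLp u 4) (hu2 : MemLp u 2) (hw : MemLp w0 4)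
    (B : (Ω → EuclideanSpace ℝ (Fin 2)) → Ω → EuclideanSpace ℝ (Fin 2))
    (hB : ∀ z x, B z x = (γ x * ‖z x + w0 x‖) • (z x + w0 x)) :
    -(r / (2 * lam)) *
        (((∫ x, ‖w0 x‖ ^ 4) ^ ((1:ℝ)/4)) ^ 4 + ((∫ x, ‖u x‖ ^ 2) ^ ((1:ℝ)/2)) ^ 2)
      ≤ ∫ x, ⟪B u x, u x⟫ :=
  tidal_B_coercive_lower_bound_general lam r hlam hr h hh γ hγ u w0 hu2 hw B hB
end

section
/- Ladyzhenskaya's inequality in dimension 2: for every u ∈ C_c^∞(Ω;ℝ²), ‖u‖_{L⁴} ≤ 2^{1/4} ‖u‖_{L²}^{1/2} ‖∇u‖_{L²}^{1/2}. -/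
open MeasureTheory
open Set

lemma aux_ftc_half {φ : ℝ → ℝ} (hφ : ContDiff ℝ 1 φ) (hc : HasCompactSupport φ) (b : ℝ) :
    φ b ≤ (1/2) * ∫ x, |deriv φ x| := by
  have hderiv : ∀ x, HasDerivAt φ (deriv φ x) x := fun x =>
    (hφ.differentiable one_ne_zero x).hasDerivAt
  have hdc : Continuous (deriv φ) := hφ.continuous_deriv le_rfl
  have hint : Integrable (deriv φ) := hdc.integrable_of_hasCompactSupport hc.deriv
  have hintφ : Integrable φ := hφ.continuous.integrable_of_hasCompactSupport hc
  have h0 : ∫ x, deriv φ x = 0 := integral_eq_zero_of_hasDerivAt_of_integrable hderiv hint hintφ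
  have h1 : ∫ x in Iic b, deriv φ x = φ b := hc.integral_Iic_deriv_eq hφ b
  have habs' : ∀ s : Set ℝ, |∫ x in s, deriv φ x| ≤ ∫ x in s, |deriv φ x| := fun s => by
    simpa [Real.norm_eq_abs] using
      norm_integral_le_integral_norm (μ := volume.restrict s) (deriv φ)
  have hsplit : (∫ x in Iic b, deriv φ x) + ∫ x in Ioi b, deriv φ x = ∫ x, deriv φ x := by
    have := setIntegral_union (Set.Iic_disjoint_Ioi (le_refl b)) measurableSet_Ioi
      hint.integrableOn hint.integrableOn
    rw [Set.Iic_union_Ioi, setIntegral_univ] at this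
    exact this.symm
  have habs : Integrable (fun x => |deriv φ x|) := hint.abs
  have hIic : (∫ x in Iic b, deriv φ x) ≤ ∫ x in Iic b, |deriv φ x| :=
    le_trans (le_abs_self _) (habs' _)
  have hIoi : -(∫ x in Ioi b, deriv φ x) ≤ ∫ x in Ioi b, |deriv φ x| :=
    le_trans (neg_le_abs _) (habs' _)
  have hsplit2 : (∫ x in Iic b, |deriv φ x|) + ∫ x in Ioi b, |deriv φ x| = ∫ x, |deriv φ x| := by
    have := setIntegral_union (Set.Iic_disjoint_Ioi (le_refl b)) measurableSet_Ioi
      habs.integrableOn habs.integrableOn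
    rw [Set.Iic_union_Ioi, setIntegral_univ] at this
    exact this.symm
  linarith

open scoped InnerProductSpace in
lemma aux_key1d {E : Type*} [NormedAddCommGroup E] [InnerProductSpace ℝ E]
    (w : ℝ → E) (h : ℝ → ℝ) (hw : ContDiff ℝ 1 w) (hsupp : HasCompactSupport w)
    (hh : Continuous h) (hbound : ∀ t, ‖deriv w t‖ ≤ h t) (b : ℝ) :
    ‖w b‖ ^ 2 ≤ ∫ t, ‖w t‖ * h t := by
  set φ : ℝ → ℝ := fun t => ‖w t‖ ^ 2 with hφdef
  have hφ : ContDiff ℝ 1 φ := hw.norm_sq ℝ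
  have hφc : HasCompactSupport φ := hsupp.comp_left (g := fun x : E => ‖x‖ ^ 2) (by simp)
  have hder : ∀ t, HasDerivAt φ (⟪w t, deriv w t⟫_ℝ + ⟪deriv w t, w t⟫_ℝ) t := by
    intro t
    have hwd : HasDerivAt w (deriv w t) t := (hw.differentiable one_ne_zero t).hasDerivAt
    have := HasDerivAt.inner ℝ hwd hwd
    simpa only [real_inner_self_eq_norm_sq] using this
  have hderbound : ∀ t, |deriv φ t| ≤ 2 * (‖w t‖ * h t) := by
    intro t
    rw [(hder t).deriv]
    calc |⟪w t, deriv w t⟫_ℝ + ⟪deriv w t, w t⟫_ℝ| ≤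
        |⟪w t, deriv w t⟫_ℝ| + |⟪deriv w t, w t⟫_ℝ| := abs_add_le _ _
    _ ≤ ‖w t‖ * ‖deriv w t‖ + ‖deriv w t‖ * ‖w t‖ :=
        add_le_add (abs_real_inner_le_norm _ _) (abs_real_inner_le_norm _ _)
    _ ≤ ‖w t‖ * h t + h t * ‖w t‖ := by
        have := hbound t
        have h1 : 0 ≤ ‖w t‖ := norm_nonneg _
        nlinarith
    _ = 2 * (‖w t‖ * h t) := by ring
  have hint1 : Integrable (fun t => |deriv φ t|) :=
    ((hφ.continuous_deriv le_rfl).abs).integrable_of_hasCompactSupport hφc.deriv.abs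
  have hwh : HasCompactSupport (fun t => ‖w t‖ * h t) := by
    have : HasCompactSupport (fun t => ‖w t‖) := hsupp.norm
    exact this.mul_right
  have hint2 : Integrable (fun t => ‖w t‖ * h t) :=
    (hw.continuous.norm.mul hh).integrable_of_hasCompactSupport hwh
  have hmono : (∫ t, |deriv φ t|) ≤ ∫ t, 2 * (‖w t‖ * h t) :=
    integral_mono hint1 (hint2.const_mul 2) hderbound
  have h2 : (∫ t, 2 * (‖w t‖ * h t)) = 2 * ∫ t, ‖w t‖ * h t := integral_const_mul 2 _
  have := aux_ftc_half hφ hφc b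
  simp only [hφdef] at this
  linarith

/-- Ladyzhenskaya's inequality in dimension 2: for every smooth compactly supported
vector field `u ∈ C_c^∞(Ω;ℝ²)`,
`‖u‖_{L⁴} ≤ 2^{1/4} ‖u‖_{L²}^{1/2} ‖∇u‖_{L²}^{1/2}`. -/
theorem ladyzhenskaya_dim2
    (Ω : Set (EuclideanSpace ℝ (Fin 2))) (hΩ : IsOpen Ω)
    (u : EuclideanSpace ℝ (Fin 2) → EuclideanSpace ℝ (Fin 2))
    (hsmooth : ContDiff ℝ (⊤ : ℕ∞) u) (hcpt : HasCompactSupport u)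
    (hsupp : tsupport u ⊆ Ω) :
    (∫ x, ‖u x‖ ^ 4) ^ ((1:ℝ)/4) ≤
      (2:ℝ) ^ ((1:ℝ)/4) *
        ((∫ x, ‖u x‖ ^ 2) ^ ((1:ℝ)/2)) ^ ((1:ℝ)/2) *
        ((∫ x, ‖fderiv ℝ u x‖ ^ 2) ^ ((1:ℝ)/2)) ^ ((1:ℝ)/2) := by
  classical
  set L : (ℝ × ℝ) ≃L[ℝ] EuclideanSpace ℝ (Fin 2) :=
    (ContinuousLinearEquiv.finTwoArrow ℝ ℝ).symm.trans
      (EuclideanSpace.equiv (Fin 2) ℝ).symm with hLdef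
  -- transfer of integrals
  have hmp : MeasurePreserving
      ((MeasurableEquiv.toLp 2 (Fin 2 → ℝ)).symm.trans MeasurableEquiv.finTwoArrow)
      volume volume :=
    (volume_preserving_finTwoArrow ℝ).comp
      (EuclideanSpace.volume_preserving_symm_measurableEquiv_toLp (Fin 2))
  have hLinv : ∀ x : EuclideanSpace ℝ (Fin 2),
      L (((MeasurableEquiv.toLp 2 (Fin 2 → ℝ)).symm.trans MeasurableEquiv.finTwoArrow) x) = x := by
    intro x
    ext i
    fin_cases i <;> rfl
  have htransfer : ∀ χ : EuclideanSpace ℝ (Fin 2) → ℝ,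
      (∫ p : ℝ × ℝ, χ (L p)) = ∫ x, χ x := by
    intro χ
    have h := hmp.integral_comp' (fun p => χ (L p))
    rw [← h]
    exact integral_congr_ae (Filter.Eventually.of_forall fun x => congrArg χ (hLinv x))
  have hLnorm1 : ‖L ((1:ℝ), (0:ℝ))‖ = 1 := by
    simp [hLdef, EuclideanSpace.norm_eq, Fin.sum_univ_two]
  have hLnorm2 : ‖L ((0:ℝ), (1:ℝ))‖ = 1 := by
    simp [hLdef, EuclideanSpace.norm_eq, Fin.sum_univ_two]
  set v : ℝ × ℝ → EuclideanSpace ℝ (Fin 2) := fun p => u (L p) with hvdef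
  set H : ℝ × ℝ → ℝ := fun p => ‖fderiv ℝ u (L p)‖ with hHdef
  have hv_cont : Continuous v := hsmooth.continuous.comp L.continuous
  have hv_supp : HasCompactSupport v := hcpt.comp_homeomorph L.toHomeomorph
  have hfdc : Continuous (fderiv ℝ u) := hsmooth.continuous_fderiv (by simp)
  have hH_cont : Continuous H := (hfdc.comp L.continuous).norm
  have hH_supp : HasCompactSupport H :=
    ((hcpt.fderiv (𝕜 := ℝ)).comp_homeomorph L.toHomeomorph).norm
  -- integrability over the product space
  have int4 : Integrable (fun p => ‖v p‖ ^ 4) :=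
    (hv_cont.norm.pow 4).integrable_of_hasCompactSupport
      (hv_supp.comp_left (g := fun e : EuclideanSpace ℝ (Fin 2) => ‖e‖ ^ 4) (by simp) :)
  have int2 : Integrable (fun p => ‖v p‖ ^ 2) :=
    (hv_cont.norm.pow 2).integrable_of_hasCompactSupport
      (hv_supp.comp_left (g := fun e : EuclideanSpace ℝ (Fin 2) => ‖e‖ ^ 2) (by simp) :)
  have intH2 : Integrable (fun p => H p ^ 2) :=
    (hH_cont.pow 2).integrable_of_hasCompactSupport
      (hH_supp.comp_left (g := fun t : ℝ => t ^ 2) (by simp) :)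
  have intVH : Integrable (fun p => ‖v p‖ * H p) :=
    (hv_cont.norm.mul hH_cont).integrable_of_hasCompactSupport hv_supp.norm.mul_right
  -- slice estimates
  have slice1 : ∀ x y : ℝ, ‖v (x, y)‖ ^ 2 ≤ ∫ t, ‖v (t, y)‖ * H (t, y) := by
    intro x y
    set w : ℝ → EuclideanSpace ℝ (Fin 2) := fun t => u (L (t, y)) with hwdef
    have hw : ContDiff ℝ 1 w :=
      (hsmooth.of_le (by simp)).comp (L.contDiff.comp (contDiff_id.prodMk contDiff_const))
    have hwsupp : HasCompactSupport w := by
      apply HasCompactSupport.intro (hv_supp.image continuous_fst)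
      intro t ht
      by_contra hne
      exact ht ⟨(t, y), subset_tsupport v (by simpa [hvdef] using hne), rfl⟩
    have hbound : ∀ t, ‖deriv w t‖ ≤ H (t, y) := by
      intro t
      have h1 : HasDerivAt (fun s : ℝ => (s, y)) ((1:ℝ), (0:ℝ)) t :=
        (hasDerivAt_id t).prodMk (hasDerivAt_const t y)
      have h2 : HasDerivAt (fun s : ℝ => L (s, y)) (L (1, 0)) t :=
        ((L : (ℝ × ℝ) →L[ℝ] EuclideanSpace ℝ (Fin 2)).hasFDerivAt).comp_hasDerivAt t h1
      have h3 : HasDerivAt w (fderiv ℝ u (L (t, y)) (L (1, 0))) t :=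
        ((hsmooth.differentiable (by simp)) (L (t, y))).hasFDerivAt.comp_hasDerivAt t h2
      rw [h3.deriv]
      calc ‖fderiv ℝ u (L (t, y)) (L (1, 0))‖
          ≤ ‖fderiv ℝ u (L (t, y))‖ * ‖L ((1:ℝ), (0:ℝ))‖ :=
            (fderiv ℝ u (L (t, y))).le_opNorm _
        _ = H (t, y) := by rw [hLnorm1, mul_one]
    have hHy : Continuous fun t : ℝ => H (t, y) :=
      hH_cont.comp (continuous_id.prodMk continuous_const)
    exact aux_key1d w (fun t => H (t, y)) hw hwsupp hHy hbound x
  have slice2 : ∀ x y : ℝ, ‖v (x, y)‖ ^ 2 ≤ ∫ t, ‖v (x, t)‖ * H (x, t) := by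
    intro x y
    set w : ℝ → EuclideanSpace ℝ (Fin 2) := fun t => u (L (x, t)) with hwdef
    have hw : ContDiff ℝ 1 w :=
      (hsmooth.of_le (by simp)).comp (L.contDiff.comp (contDiff_const.prodMk contDiff_id))
    have hwsupp : HasCompactSupport w := by
      apply HasCompactSupport.intro (hv_supp.image continuous_snd)
      intro t ht
      by_contra hne
      exact ht ⟨(x, t), subset_tsupport v (by simpa [hvdef] using hne), rfl⟩
    have hbound : ∀ t, ‖deriv w t‖ ≤ H (x, t) := by
      intro t
      have h1 : HasDerivAt (fun s : ℝ => (x, s)) ((0:ℝ), (1:ℝ)) t :=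
        (hasDerivAt_const t x).prodMk (hasDerivAt_id t)
      have h2 : HasDerivAt (fun s : ℝ => L (x, s)) (L (0, 1)) t :=
        ((L : (ℝ × ℝ) →L[ℝ] EuclideanSpace ℝ (Fin 2)).hasFDerivAt).comp_hasDerivAt t h1
      have h3 : HasDerivAt w (fderiv ℝ u (L (x, t)) (L (0, 1))) t :=
        ((hsmooth.differentiable (by simp)) (L (x, t))).hasFDerivAt.comp_hasDerivAt t h2
      rw [h3.deriv]
      calc ‖fderiv ℝ u (L (x, t)) (L (0, 1))‖
          ≤ ‖fderiv ℝ u (L (x, t))‖ * ‖L ((0:ℝ), (1:ℝ))‖ :=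
            (fderiv ℝ u (L (x, t))).le_opNorm _
        _ = H (x, t) := by rw [hLnorm2, mul_one]
    have hHx : Continuous fun t : ℝ => H (x, t) :=
      hH_cont.comp (continuous_const.prodMk continuous_id)
    exact aux_key1d w (fun t => H (x, t)) hw hwsupp hHx hbound y
  -- Fubini setup
  have hprod : (volume : Measure (ℝ × ℝ)) = (volume : Measure ℝ).prod volume :=
    Measure.volume_eq_prod ℝ ℝ
  set F : ℝ → ℝ := fun y => ∫ t, ‖v (t, y)‖ * H (t, y) with hFdef
  set G : ℝ → ℝ := fun x => ∫ t, ‖v (x, t)‖ * H (x, t) with hGdef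
  have intVH' : Integrable (fun p : ℝ × ℝ => ‖v p‖ * H p)
      ((volume : Measure ℝ).prod volume) := by rwa [← hprod]
  have hFint : Integrable F := intVH'.integral_prod_right
  have hGint : Integrable G := intVH'.integral_prod_left
  set S : ℝ := ∫ p : ℝ × ℝ, ‖v p‖ * H p with hSdef
  have hGS : (∫ x, G x) = S := by
    rw [hSdef, hprod, integral_prod _ intVH']
  have hFS : (∫ y, F y) = S := by
    rw [hSdef, hprod, integral_prod_symm _ intVH']
  have hS0 : 0 ≤ S := integral_nonneg fun p => by positivity
  have step1 : (∫ p : ℝ × ℝ, ‖v p‖ ^ 4) ≤ S ^ 2 := by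
    have hmono : (∫ p : ℝ × ℝ, ‖v p‖ ^ 4) ≤ ∫ p : ℝ × ℝ, G p.1 * F p.2 := by
      apply integral_mono int4 ?_ ?_
      · rw [hprod]; exact hGint.mul_prod hFint
      · intro p
        have h1 : ‖v p‖ ^ 2 ≤ G p.1 := by
          have := slice2 p.1 p.2; simpa using this
        have h2 : ‖v p‖ ^ 2 ≤ F p.2 := by
          have := slice1 p.1 p.2; simpa using this
        calc ‖v p‖ ^ 4 = ‖v p‖ ^ 2 * ‖v p‖ ^ 2 := by ring
          _ ≤ G p.1 * F p.2 :=
            mul_le_mul h1 h2 (by positivity) (le_trans (by positivity) h1)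
    have heq : (∫ p : ℝ × ℝ, G p.1 * F p.2) = S ^ 2 := by
      rw [hprod, integral_prod_mul G F, hGS, hFS, sq]
    linarith
  -- Hölder / Cauchy-Schwarz
  have hconj : Real.HolderConjugate 2 2 := Real.holderConjugate_iff.mpr ⟨one_lt_two, by norm_num⟩
  have memv : MemLp (fun p : ℝ × ℝ => ‖v p‖) (ENNReal.ofReal 2) volume :=
    hv_cont.norm.memLp_of_hasCompactSupport hv_supp.norm
  have memH : MemLp H (ENNReal.ofReal 2) volume :=
    hH_cont.memLp_of_hasCompactSupport hH_supp
  have hHolder : S ≤ (∫ p : ℝ × ℝ, ‖v p‖ ^ 2) ^ ((1:ℝ)/2) *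
      (∫ p : ℝ × ℝ, H p ^ 2) ^ ((1:ℝ)/2) := by
    have h := integral_mul_le_Lp_mul_Lq_of_nonneg hconj
      (Filter.Eventually.of_forall fun p : ℝ × ℝ => norm_nonneg (v p))
      (Filter.Eventually.of_forall fun p : ℝ × ℝ => norm_nonneg (fderiv ℝ u (L p)))
      memv memH
    have hr : ∀ r : ℝ, r ^ (2:ℝ) = r ^ (2:ℕ) := fun r => by
      rw [show (2:ℝ) = ((2:ℕ):ℝ) by norm_num, Real.rpow_natCast]
    simpa only [hr] using h
  -- transfer to the Euclidean space
  have hA : (∫ p : ℝ × ℝ, ‖v p‖ ^ 4) = ∫ x, ‖u x‖ ^ 4 :=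
    htransfer (fun x => ‖u x‖ ^ 4)
  have hB : (∫ p : ℝ × ℝ, ‖v p‖ ^ 2) = ∫ x, ‖u x‖ ^ 2 :=
    htransfer (fun x => ‖u x‖ ^ 2)
  have hC : (∫ p : ℝ × ℝ, H p ^ 2) = ∫ x, ‖fderiv ℝ u x‖ ^ 2 :=
    htransfer (fun x => ‖fderiv ℝ u x‖ ^ 2)
  set A : ℝ := ∫ x, ‖u x‖ ^ 4 with hAdef
  set B : ℝ := ∫ x, ‖u x‖ ^ 2 with hBdef
  set C : ℝ := ∫ x, ‖fderiv ℝ u x‖ ^ 2 with hCdef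
  have hA0 : 0 ≤ A := integral_nonneg fun x => by positivity
  have hB0 : 0 ≤ B := integral_nonneg fun x => by positivity
  have hC0 : 0 ≤ C := integral_nonneg fun x => by positivity
  have key : A ≤ B * C := by
    have h1 : A ≤ S ^ 2 := by rw [← hA]; exact step1
    have h2 : S ^ 2 ≤ (B ^ ((1:ℝ)/2) * C ^ ((1:ℝ)/2)) ^ 2 := by
      apply pow_le_pow_left₀ hS0
      rw [← hB, ← hC]; exact hHolder
    have h3 : (B ^ ((1:ℝ)/2) * C ^ ((1:ℝ)/2)) ^ 2 = B * C := by
      rw [mul_pow, ← Real.rpow_natCast (B ^ ((1:ℝ)/2)) 2,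
        ← Real.rpow_natCast (C ^ ((1:ℝ)/2)) 2,
        ← Real.rpow_mul hB0, ← Real.rpow_mul hC0]
      norm_num
    linarith
  have hBq : (B ^ ((1:ℝ)/2)) ^ ((1:ℝ)/2) = B ^ ((1:ℝ)/4) := by
    rw [← Real.rpow_mul hB0]; norm_num
  have hCq : (C ^ ((1:ℝ)/2)) ^ ((1:ℝ)/2) = C ^ ((1:ℝ)/4) := by
    rw [← Real.rpow_mul hC0]; norm_num
  rw [hBq, hCq]
  calc A ^ ((1:ℝ)/4) ≤ (B * C) ^ ((1:ℝ)/4) :=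
      Real.rpow_le_rpow hA0 key (by norm_num)
    _ = B ^ ((1:ℝ)/4) * C ^ ((1:ℝ)/4) := Real.mul_rpow hB0 hC0
    _ ≤ (2:ℝ) ^ ((1:ℝ)/4) * B ^ ((1:ℝ)/4) * C ^ ((1:ℝ)/4) := by
      have h2 : (1:ℝ) ≤ (2:ℝ) ^ ((1:ℝ)/4) :=
        Real.one_le_rpow (by norm_num) (by norm_num)
      have hb : 0 ≤ B ^ ((1:ℝ)/4) := Real.rpow_nonneg hB0 _
      have hc : 0 ≤ C ^ ((1:ℝ)/4) := Real.rpow_nonneg hC0 _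
      nlinarith [mul_nonneg hb hc]
end

section
/- Continuous dependence of the tidal state on the control: if (u_{U*+τU}, ξ_{U*+τU}) and (u_{U*}, ξ_{U*}) are weak solutions of the controlled tidal system with controls U*+τU and U* and the same initial data, then sup_{t∈[0,T]}[‖u_{U*+τU}(t) − u_{U*}(t)‖²_{L²} + ‖ξ_{U*+τU}(t) − ξ_{U*}(t)‖²_{L²}] + α∫₀ᵀ‖∇(u_{U*+τU} − u_{U*})(t)‖²_{L²} dt ≤ (4τ²/α)(∫₀ᵀ‖U(t)‖²_{H⁻¹} dt) · e^{[(4/α)(2+μ²)+M]T}. -/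
/-!
The difference `(w, η)` of the two solutions solves the linear system forced by `τU` with zero
initial data, up to a term that monotonicity of `B` makes nonnegative against `w`. Testing with
`(w, η)` and applying Young's inequality, the energy `E = ‖w‖²_H + ‖η‖²` obeys
`E' + (α/2)‖w‖²_V ≤ K E + (4τ²/(3α))‖U‖²_{V'}` with `K = (4/α)(2 + μ²) + M`. The integrating factor
`e^{-Kt}` then bounds both `E(t)` and `(α/2)∫₀ᵀ‖w‖²_V` by `e^{KT} (4τ²/(3α)) ∫₀ᵀ‖U‖²`, and adding
the first bound to twice the second gives the constant `4τ²/α`.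
-/

open MeasureTheory Filter Topology Set
open scoped RealInnerProductSpace

theorem add_integral_le_exp_mul_of_hasDerivAt {φ φ' d g : ℝ → ℝ} {K t : ℝ} (hK : 0 ≤ K)
    (ht : 0 ≤ t) (hd : Continuous d) (hg : Continuous g)
    (hd₀ : ∀ s ∈ Icc 0 t, 0 ≤ d s) (hg₀ : ∀ s ∈ Icc 0 t, 0 ≤ g s)
    (hφ : ∀ s ∈ Icc 0 t, HasDerivAt φ (φ' s) s)
    (hφ' : ∀ s ∈ Icc 0 t, φ' s + d s ≤ K * φ s + g s) :
    φ t + ∫ s in 0..t, d s ≤ Real.exp (K * t) * (φ 0 + ∫ s in 0..t, g s) := by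
  set e : ℝ → ℝ := fun s => Real.exp (-K * s)
  have he : ∀ s, HasDerivAt e (-K * e s) s := fun s =>
    ((hasDerivAt_id s).const_mul (-K)).exp.congr_deriv (by simp only [e, id]; ring)
  have he_cont : Continuous e := by fun_prop
  set Z : ℝ → ℝ := fun r => e r * φ r + ∫ s in 0..r, e s * (d s - g s)
  have hZ : ∀ s ∈ Icc 0 t, HasDerivAt Z (e s * (φ' s - K * φ s + d s - g s)) s := by
    intro s hs
    have hprim := ((he_cont.mul (hd.sub hg)).integral_hasStrictDerivAt 0 s).hasDerivAt
    exact ((he s).mul (hφ s hs)).add hprim |>.congr_deriv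
      (by simp only [Pi.mul_apply, Pi.sub_apply]; ring)
  have hZ_anti : AntitoneOn Z (Icc 0 t) := by
    apply antitoneOn_of_deriv_nonpos (convex_Icc 0 t)
    · exact fun s hs => (hZ s hs).continuousAt.continuousWithinAt
    · rw [interior_Icc]
      exact fun s hs => (hZ s (Ioo_subset_Icc_self hs)).differentiableAt.differentiableWithinAt
    · rw [interior_Icc]
      intro s hs
      rw [(hZ s (Ioo_subset_Icc_self hs)).deriv]
      exact mul_nonpos_of_nonneg_of_nonpos (Real.exp_pos _).le
        (by linarith [hφ' s (Ioo_subset_Icc_self hs)])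
  have hZt : Z t ≤ φ 0 := by
    simpa [Z, e] using hZ_anti (left_mem_Icc.2 ht) (right_mem_Icc.2 ht) ht
  have hInt : ∀ {f : ℝ → ℝ}, Continuous f → IntervalIntegrable f volume 0 t :=
    fun hf => hf.intervalIntegrable _ _
  have he_le_one : ∀ s ∈ Icc 0 t, e s ≤ 1 := fun s hs =>
    Real.exp_le_one_iff.2 (by nlinarith [hs.1])
  have he_anti : ∀ s ∈ Icc 0 t, e t ≤ e s := fun s hs =>
    Real.exp_le_exp.2 (by nlinarith [hs.2])
  have hd_le : e t * ∫ s in 0..t, d s ≤ ∫ s in 0..t, e s * d s := by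
    rw [← intervalIntegral.integral_const_mul]
    exact intervalIntegral.integral_mono_on ht (hInt (by fun_prop)) (hInt (by fun_prop))
      fun s hs => mul_le_mul_of_nonneg_right (he_anti s hs) (hd₀ s hs)
  have hg_le : ∫ s in 0..t, e s * g s ≤ ∫ s in 0..t, g s :=
    intervalIntegral.integral_mono_on ht (hInt (by fun_prop)) (hInt (by fun_prop))
      fun s hs => mul_le_of_le_one_left (hg₀ s hs) (he_le_one s hs)
  have hsplit : ∫ s in 0..t, e s * (d s - g s)
      = (∫ s in 0..t, e s * d s) - ∫ s in 0..t, e s * g s := by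
    simp_rw [mul_sub]
    exact intervalIntegral.integral_sub (hInt (by fun_prop)) (hInt (by fun_prop))
  have hZt' : e t * (φ t + ∫ s in 0..t, d s) ≤ φ 0 + ∫ s in 0..t, g s := by
    simp only [Z, hsplit] at hZt
    linarith
  have hexp : Real.exp (K * t) * e t = 1 := by simp [e, ← Real.exp_add]
  calc φ t + ∫ s in 0..t, d s = Real.exp (K * t) * (e t * (φ t + ∫ s in 0..t, d s)) := by
        rw [← mul_assoc, hexp, one_mul]
    _ ≤ Real.exp (K * t) * (φ 0 + ∫ s in 0..t, g s) := by gcongr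

section GelfandTriple

variable {V H Q : Type*} [NormedAddCommGroup V] [NormedSpace ℝ V]
  [NormedAddCommGroup H] [InnerProductSpace ℝ H] [NormedAddCommGroup Q] [InnerProductSpace ℝ Q]

theorem HasDerivAt.norm_sq_of_pairing {ι : V →L[ℝ] H} {jH : H →L[ℝ] V →L[ℝ] ℝ}
    (hjH : ∀ x v, jH x v = ⟪x, ι v⟫) {w : ℝ → V} {D : V →L[ℝ] ℝ} {t : ℝ}
    (hw : ContinuousAt w t) (hD : HasDerivAt (fun s => jH (ι (w s))) D t) :
    HasDerivAt (fun s => ‖ι (w s)‖ ^ 2) (2 * D (w t)) t := by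
  rw [hasDerivAt_iff_tendsto_slope] at hD ⊢
  have hsum : Tendsto (fun s => w s + w t) (𝓝[≠] t) (𝓝 (w t + w t)) :=
    (hw.add continuousAt_const).tendsto.mono_left nhdsWithin_le_nhds
  have hlim := (isBoundedBilinearMap_apply.continuous.tendsto _).comp (hD.prodMk_nhds hsum)
  -- symmetry of the pairing: only the `V'`-valued path has to be differentiable
  have hdiff : ∀ s, ‖ι (w s)‖ ^ 2 - ‖ι (w t)‖ ^ 2
      = (jH (ι (w s)) - jH (ι (w t))) (w s + w t) := by
    intro s
    simp only [sub_apply, map_add, hjH,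
      real_inner_comm (ι (w t)) (ι (w s)), real_inner_self_eq_norm_sq]
    ring
  convert hlim using 2
  · ext s
    simp only [slope_def_module, Function.comp_apply, smul_eq_mul, smul_apply, hdiff]
  · rw [map_add]; ring

theorem energy_rate_add_dissipation_le {α μ M : ℝ} (hα : 0 < α) (hM : 0 ≤ M) {ι : V →L[ℝ] H}
    {A : V →L[ℝ] V →L[ℝ] ℝ} (hA : ∀ v, A v v = α * ‖v‖ ^ 2)
    {grad : Q →L[ℝ] V →L[ℝ] ℝ} (hgrad : ∀ q v, |grad q v| ≤ √2 * ‖q‖ * ‖v‖)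
    {divh : V →L[ℝ] Q} (hdivh : ∀ v, ‖divh v‖ ≤ √2 * μ * ‖v‖ + M * ‖ι v‖)
    (τ : ℝ) (F b : V →L[ℝ] ℝ) (w : V) (η : Q) (hb : 0 ≤ b w) :
    2 * (τ • F - A w - b - grad η) w + 2 * ⟪η, -divh w⟫ + α / 2 * ‖w‖ ^ 2 ≤
      ((4 / α) * (2 + μ ^ 2) + M) * (‖ι w‖ ^ 2 + ‖η‖ ^ 2) + 4 * τ ^ 2 / (3 * α) * ‖F‖ ^ 2 := by
  have hF : τ * F w ≤ |τ| * ‖F‖ * ‖w‖ := (le_abs_self _).trans <| by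
    rw [abs_mul, mul_assoc, ← Real.norm_eq_abs (F w)]
    gcongr
    exact F.le_opNorm w
  have hgrad' : -grad η w ≤ √2 * ‖η‖ * ‖w‖ := (neg_le_abs _).trans (hgrad η w)
  have hdivh' : ⟪η, -divh w⟫ ≤ ‖η‖ * (√2 * μ * ‖w‖ + M * ‖ι w‖) :=
    (real_inner_le_norm _ _).trans (by rw [norm_neg]; gcongr; exact hdivh w)
  -- weights `3α/4 + α/4 + α/2` absorb `3α/2` of the coercivity `2α`
  have y1 := two_mul_le_add_mul_sq (ε := 3 * α / 4) (a := ‖w‖) (b := |τ| * ‖F‖) (by positivity)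
  have y2 := two_mul_le_add_mul_sq (ε := α / 4) (a := ‖w‖) (b := √2 * ‖η‖) (by positivity)
  have y3 := two_mul_le_add_mul_sq (ε := α / 2) (a := ‖w‖) (b := √2 * μ * ‖η‖) (by positivity)
  have y4 := mul_le_mul_of_nonneg_left (two_mul_le_add_sq ‖ι w‖ ‖η‖) hM
  have hιw : 0 ≤ 4 / α * (2 + μ ^ 2) * ‖ι w‖ ^ 2 := by positivity
  simp only [sub_apply, smul_apply, smul_eq_mul, hA]
  linear_combination 2 * hF + y1 + 2 * hgrad' + y2 + 2 * hdivh' + y3 + y4 + 2 * hb + hιw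
    + (4 / (3 * α) * ‖F‖ ^ 2) * sq_abs τ
    + (4 / α * ‖η‖ ^ 2 + 2 / α * μ ^ 2 * ‖η‖ ^ 2) * Real.sq_sqrt (zero_le_two : (0 : ℝ) ≤ 2)

theorem tidal_difference_energy_le {α μ M T τ : ℝ} (hα : 0 < α) (hM : 0 ≤ M)
    {ι : V →L[ℝ] H} {jH : H →L[ℝ] V →L[ℝ] ℝ} (hjH : ∀ x v, jH x v = ⟪x, ι v⟫)
    {A : V →L[ℝ] V →L[ℝ] ℝ} (hA : ∀ v, A v v = α * ‖v‖ ^ 2)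
    {grad : Q →L[ℝ] V →L[ℝ] ℝ} (hgrad : ∀ q v, |grad q v| ≤ √2 * ‖q‖ * ‖v‖)
    {divh : V →L[ℝ] Q} (hdivh : ∀ v, ‖divh v‖ ≤ √2 * μ * ‖v‖ + M * ‖ι v‖)
    {U b : ℝ → V →L[ℝ] ℝ} {w : ℝ → V} {η : ℝ → Q}
    (hw : ∀ s ∈ Icc 0 T,
      HasDerivAt (fun r => jH (ι (w r))) (τ • U s - A (w s) - b s - grad (η s)) s)
    (hη : ∀ s ∈ Icc 0 T, HasDerivAt η (-divh (w s)) s)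
    (hb : ∀ s ∈ Icc 0 T, 0 ≤ b s (w s)) (hw₀ : w 0 = 0) (hη₀ : η 0 = 0)
    (hwc : Continuous w) (hUc : Continuous U) {t : ℝ} (ht : t ∈ Icc 0 T) :
    ‖ι (w t)‖ ^ 2 + ‖η t‖ ^ 2 + α * ∫ s in 0..T, ‖w s‖ ^ 2 ≤
      ((4 * τ ^ 2 / α) * ∫ s in 0..T, ‖U s‖ ^ 2)
        * Real.exp (((4 / α) * (2 + μ ^ 2) + M) * T) := by
  set K := (4 / α) * (2 + μ ^ 2) + M
  set c := 4 * τ ^ 2 / (3 * α)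
  have hK : 0 ≤ K := by positivity
  have hT : 0 ≤ T := ht.1.trans ht.2
  have henergy : ∀ r ∈ Icc 0 T, ‖ι (w r)‖ ^ 2 + ‖η r‖ ^ 2 + ∫ s in 0..r, α / 2 * ‖w s‖ ^ 2
      ≤ Real.exp (K * r) * ∫ s in 0..r, c * ‖U s‖ ^ 2 := by
    intro r hr
    have hsub : Icc 0 r ⊆ Icc 0 T := Icc_subset_Icc_right hr.2
    simpa [hw₀, hη₀] using add_integral_le_exp_mul_of_hasDerivAt hK hr.1 (by fun_prop)
      (by fun_prop) (fun s _ => by positivity) (fun s _ => by positivity)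
      (fun s hs => (HasDerivAt.norm_sq_of_pairing hjH hwc.continuousAt (hw s (hsub hs))).add
        (hη s (hsub hs)).norm_sq)
      (fun s hs => energy_rate_add_dissipation_le hα hM hA hgrad hdivh τ (U s) (b s) (w s) (η s)
        (hb s (hsub hs)))
  have hforcing : ∀ r ∈ Icc 0 T, Real.exp (K * r) * ∫ s in 0..r, c * ‖U s‖ ^ 2
      ≤ Real.exp (K * T) * ∫ s in 0..T, c * ‖U s‖ ^ 2 := by
    intro r hr
    gcongr
    · exact intervalIntegral.integral_nonneg hr.1 fun s _ => by positivity
    · exact hr.2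
    · exact intervalIntegral.integral_mono_interval le_rfl hr.1 hr.2
        (Eventually.of_forall fun s => by positivity)
        (Continuous.intervalIntegrable (by fun_prop) _ _)
  have ht_bound := (henergy t ht).trans (hforcing t ht)
  have hT_bound := (henergy T (right_mem_Icc.2 hT)).trans (hforcing T (right_mem_Icc.2 hT))
  have hwt : 0 ≤ ∫ s in 0..t, α / 2 * ‖w s‖ ^ 2 :=
    intervalIntegral.integral_nonneg ht.1 fun s _ => by positivity
  have hc : 4 * τ ^ 2 / α = 3 * c := by simp only [c]; field_simp
  simp only [intervalIntegral.integral_const_mul] at ht_bound hT_bound hwt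
  rw [hc]
  linear_combination ht_bound + 2 * hT_bound + hwt + 2 * sq_nonneg ‖ι (w T)‖ + 2 * sq_nonneg ‖η T‖

end GelfandTriple

theorem tidal_continuous_dependence_on_control_general
    {V H Q : Type*}
    [NormedAddCommGroup V] [NormedSpace ℝ V]
    [NormedAddCommGroup H] [InnerProductSpace ℝ H]
    [NormedAddCommGroup Q] [InnerProductSpace ℝ Q]
    (α μ M T τ : ℝ) (hα : 0 < α) (hM : 0 ≤ M)
    (ι : V →L[ℝ] H) (jH : H →L[ℝ] (V →L[ℝ] ℝ))
    (hjH : ∀ (x : H) (v : V), jH x v = ⟪x, ι v⟫)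
    (A : V →L[ℝ] (V →L[ℝ] ℝ)) (hA : ∀ v, A v v = α * ‖v‖ ^ 2)
    -- the monotone tidal nonlinearity B(u) = γ|u+w⁰|(u+w⁰)
    (B : V → (V →L[ℝ] ℝ)) (hB : ∀ u v : V, 0 ≤ (B u - B v) (u - v))
    (grad : Q →L[ℝ] (V →L[ℝ] ℝ))
    (hgrad : ∀ q v, |grad q v| ≤ Real.sqrt 2 * ‖q‖ * ‖v‖)
    (divh : V →L[ℝ] Q)
    (hdivh : ∀ v, ‖divh v‖ ≤ Real.sqrt 2 * μ * ‖v‖ + M * ‖ι v‖)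
    (f Ust U : ℝ → (V →L[ℝ] ℝ))
    (u1 u2 : ℝ → V) (ξ1 ξ2 : ℝ → Q)
    (heq1 : ∀ t ∈ Set.Icc (0:ℝ) T,
      HasDerivAt (fun s => jH (ι (u1 s)))
        (f t + Ust t + τ • U t - A (u1 t) - B (u1 t) - grad (ξ1 t)) t)
    (heq1' : ∀ t ∈ Set.Icc (0:ℝ) T, HasDerivAt ξ1 (-(divh (u1 t))) t)
    (heq2 : ∀ t ∈ Set.Icc (0:ℝ) T,
      HasDerivAt (fun s => jH (ι (u2 s)))
        (f t + Ust t - A (u2 t) - B (u2 t) - grad (ξ2 t)) t)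
    (heq2' : ∀ t ∈ Set.Icc (0:ℝ) T, HasDerivAt ξ2 (-(divh (u2 t))) t)
    (hinit_u : u1 0 = u2 0) (hinit_ξ : ξ1 0 = ξ2 0)
    (hu1c : Continuous u1) (hu2c : Continuous u2) (hUc : Continuous U) :
    ∀ t ∈ Set.Icc (0:ℝ) T,
      ‖ι (u1 t - u2 t)‖ ^ 2 + ‖ξ1 t - ξ2 t‖ ^ 2
        + α * ∫ s in (0:ℝ)..T, ‖u1 s - u2 s‖ ^ 2 ≤
      ((4 * τ ^ 2 / α) * ∫ s in (0:ℝ)..T, ‖U s‖ ^ 2)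
        * Real.exp (((4 / α) * (2 + μ ^ 2) + M) * T) := by
  intro t ht
  refine tidal_difference_energy_le (w := u1 - u2) (η := ξ1 - ξ2)
    (b := fun s => B (u1 s) - B (u2 s)) hα hM hjH hA hgrad hdivh
    (fun s hs => ?_) (fun s hs => ?_) (fun s _ => hB (u1 s) (u2 s))
    (sub_eq_zero.2 hinit_u) (sub_eq_zero.2 hinit_ξ) (hu1c.sub hu2c) hUc ht
  · simp only [Pi.sub_apply, map_sub]
    exact ((heq1 s hs).sub (heq2 s hs)).congr_deriv (by abel)
  · exact ((heq1' s hs).sub (heq2' s hs)).congr_deriv (by simp only [Pi.sub_apply, map_sub]; abel)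

/-- Continuous dependence of the tidal state on the control, in the Gelfand-triple
setting `V = H₀¹ ⊂ H = L² ⊂ V →L[ℝ] ℝ = H⁻¹`, `Q = L²(Ω)`.  If `(u₁,ξ₁)` and
`(u₂,ξ₂)` are weak solutions of the controlled tidal system with controls
`U* + τU` and `U*` and the same initial data, then for all `t ∈ [0,T]`,
`‖u₁(t) − u₂(t)‖²_{L²} + ‖ξ₁(t) − ξ₂(t)‖²_{L²} + α∫₀ᵀ‖∇(u₁−u₂)‖² ≤
  (4τ²/α)(∫₀ᵀ‖U‖²_{H⁻¹}) e^{[(4/α)(2+μ²)+M]T}`. -/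
theorem tidal_continuous_dependence_on_control
    {V H Q : Type*}
    [NormedAddCommGroup V] [NormedSpace ℝ V]
    [NormedAddCommGroup H] [InnerProductSpace ℝ H]
    [NormedAddCommGroup Q] [InnerProductSpace ℝ Q]
    (α μ M T τ : ℝ) (hα : 0 < α) (hμ : 0 ≤ μ) (hM : 0 ≤ M) (hT : 0 < T)
    (hτ : τ ∈ Set.Icc (0:ℝ) 1)
    (ι : V →L[ℝ] H) (jH : H →L[ℝ] (V →L[ℝ] ℝ))
    (hjH : ∀ (x : H) (v : V), jH x v = ⟪x, ι v⟫)
    (A : V →L[ℝ] (V →L[ℝ] ℝ)) (hA : ∀ v, A v v = α * ‖v‖ ^ 2)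
    -- the monotone tidal nonlinearity B(u) = γ|u+w⁰|(u+w⁰)
    (B : V → (V →L[ℝ] ℝ)) (hB : ∀ u v : V, 0 ≤ (B u - B v) (u - v))
    (grad : Q →L[ℝ] (V →L[ℝ] ℝ))
    (hgrad : ∀ q v, |grad q v| ≤ Real.sqrt 2 * ‖q‖ * ‖v‖)
    (divh : V →L[ℝ] Q)
    (hdivh : ∀ v, ‖divh v‖ ≤ Real.sqrt 2 * μ * ‖v‖ + M * ‖ι v‖)
    (f Ust U : ℝ → (V →L[ℝ] ℝ))
    (u1 u2 : ℝ → V) (ξ1 ξ2 : ℝ → Q)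
    (heq1 : ∀ t ∈ Set.Icc (0:ℝ) T,
      HasDerivAt (fun s => jH (ι (u1 s)))
        (f t + Ust t + τ • U t - A (u1 t) - B (u1 t) - grad (ξ1 t)) t)
    (heq1' : ∀ t ∈ Set.Icc (0:ℝ) T, HasDerivAt ξ1 (-(divh (u1 t))) t)
    (heq2 : ∀ t ∈ Set.Icc (0:ℝ) T,
      HasDerivAt (fun s => jH (ι (u2 s)))
        (f t + Ust t - A (u2 t) - B (u2 t) - grad (ξ2 t)) t)
    (heq2' : ∀ t ∈ Set.Icc (0:ℝ) T, HasDerivAt ξ2 (-(divh (u2 t))) t)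
    (hinit_u : u1 0 = u2 0) (hinit_ξ : ξ1 0 = ξ2 0)
    (hu1c : Continuous u1) (hu2c : Continuous u2) (hUc : Continuous U) :
    ∀ t ∈ Set.Icc (0:ℝ) T,
      ‖ι (u1 t - u2 t)‖ ^ 2 + ‖ξ1 t - ξ2 t‖ ^ 2
        + α * ∫ s in (0:ℝ)..T, ‖u1 s - u2 s‖ ^ 2 ≤
      ((4 * τ ^ 2 / α) * ∫ s in (0:ℝ)..T, ‖U s‖ ^ 2)
        * Real.exp (((4 / α) * (2 + μ ^ 2) + M) * T) :=
  tidal_continuous_dependence_on_control_general α μ M T τ hα hM ι jH hjH A hA B hB grad hgrad divh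
    hdivh f Ust U u1 u2 ξ1 ξ2 heq1 heq1' heq2 heq2' hinit_u hinit_ξ hu1c hu2c hUc
end
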